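/- For k ≥ 2 and n ≥ binom(k,2) + 2k, the graph K̂_n^{(k,k)} (the complete graph on v₁,…,v_n with the edges inside {v₁,…,v_k} and inside {v_{n−k+1},…,v_n} subdivided) has difference index D(K̂_n^{(k,k)}) ≥ n − 2k/3 − 1. In particular, D(K̂_n^{(k,k)}) ≥ ⌈S(K̂_n^{(k,k)})/2⌉ + k/3 − 1, where S(K̂_n^{(k,k)}) = 2n − 2k − 1 is the sum index. -/

import Mathlib

/-!
Both lower bounds only use the edges between original vertices, which form the complete graph
minus two disjoint cliques `P`, `Q` (the first and the last `k` vertices).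

Sums: the vertices `m`, `M` with the smallest and the largest label each have at least `n - k`
neighbours, sums through `m` are at most `a m + a M` and sums through `M` at least that, so there
are at least `2(n - k) - 1` sums. Labelling the original vertices `1, …, n`, the subdivision
vertices of the lower block just above `n` and those of the upper block at `0, -1, …` keeps all
sums in `[k + 2, 2n - k]`; this is where `n ≥ C(k,2) + 2k` is needed.

Differences: let `M` have the largest label and `w` be in neither clique. If `M` is in no clique,
the `n - 1` differences to `M` are distinct. Otherwise, say `M ∈ P`; then at most `k / 2` vertices
of `P` lie below `w`, or at most `k / 2` above it. In the first case take the differences from `M`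
to the vertices below `w` outside `P`, and from `w` to the vertices above it; in the second case
pivot in addition at the lowest vertex `u` of `P`. Either way the chosen differences are distinct,
giving `n - 1 - ⌊k/2⌋ ≥ n - 2k/3 - 1`.
-/

open SimpleGraph

/-- The subdivided pairs of `K̂_n^{(k,k)}` (0-indexed): pairs `i < j` with both among
the first `k` vertices, or both among the last `k` vertices. -/
def subPairs (n k : ℕ) : Type :=
  {p : Fin n × Fin n // p.1 < p.2 ∧ (((p.2 : ℕ) < k) ∨ (n - k ≤ (p.1 : ℕ)))}

instance (n k : ℕ) : Fintype (subPairs n k) := by unfold subPairs; infer_instance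

/-- `K̂_n^{(k,k)}`: the complete graph on `v₀,…,v_{n-1}` with every edge inside the first
`k` vertices and every edge inside the last `k` vertices subdivided. -/
def hatKkk (n k : ℕ) : SimpleGraph (Fin n ⊕ subPairs n k) :=
  SimpleGraph.fromRel (fun a b =>
    match a, b with
    | Sum.inl i, Sum.inl j =>
        ¬(((i : ℕ) < k ∧ (j : ℕ) < k) ∨ (n - k ≤ (i : ℕ) ∧ n - k ≤ (j : ℕ)))
    | Sum.inl i, Sum.inr p => i = p.1.1 ∨ i = p.1.2
    | Sum.inr _, Sum.inl _ => False
    | Sum.inr _, Sum.inr _ => False)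

/-- The sum index of a finite simple graph. -/
noncomputable def sumIndex {V : Type*} [Fintype V] (G : SimpleGraph V) : ℕ :=
  sInf {n | ∃ f : V → ℤ, Function.Injective f ∧
    {s : ℤ | ∃ u v, G.Adj u v ∧ s = f u + f v}.ncard = n}

/-- The difference index of a finite simple graph. -/
noncomputable def diffIndex {V : Type*} [Fintype V] (G : SimpleGraph V) : ℕ :=
  sInf {n | ∃ f : V → ℤ, Function.Injective f ∧
    {s : ℤ | ∃ u v, G.Adj u v ∧ s = |f u - f v|}.ncard = n}

open Finset Function

namespace SimpleGraph

variable {V : Type*}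

def edgeDiffs (G : SimpleGraph V) (f : V → ℤ) : Set ℤ :=
  {s | ∃ u v, G.Adj u v ∧ s = |f u - f v|}

def edgeSums (G : SimpleGraph V) (f : V → ℤ) : Set ℤ :=
  {s | ∃ u v, G.Adj u v ∧ s = f u + f v}

theorem finite_edgeDiffs [Finite V] (G : SimpleGraph V) (f : V → ℤ) : (G.edgeDiffs f).Finite :=
  (Set.finite_range fun p : V × V => |f p.1 - f p.2|).subset <| by
    rintro _ ⟨u, v, -, rfl⟩
    exact ⟨(u, v), rfl⟩

theorem finite_edgeSums [Finite V] (G : SimpleGraph V) (f : V → ℤ) : (G.edgeSums f).Finite :=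
  (Set.finite_range fun p : V × V => f p.1 + f p.2).subset <| by
    rintro _ ⟨u, v, -, rfl⟩
    exact ⟨(u, v), rfl⟩

theorem edgeDiffs_comp_hom {W : Type*} {G : SimpleGraph V} {H : SimpleGraph W} (φ : G →g H)
    (f : W → ℤ) : G.edgeDiffs (f ∘ φ) ⊆ H.edgeDiffs f := by
  rintro _ ⟨u, v, huv, rfl⟩
  exact ⟨φ u, φ v, φ.map_adj huv, rfl⟩

theorem edgeSums_comp_hom {W : Type*} {G : SimpleGraph V} {H : SimpleGraph W} (φ : G →g H)
    (f : W → ℤ) : G.edgeSums (f ∘ φ) ⊆ H.edgeSums f := by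
  rintro _ ⟨u, v, huv, rfl⟩
  exact ⟨φ u, φ v, φ.map_adj huv, rfl⟩

/-- The differences `a M - a v` (`a v < a u`), `a w - a v` (`a u < a v < a w`) and `a v - a u`
(`a w ≤ a v`) lie in the disjoint ranges `(a M - a u, ∞)`, `(0, a w - a u)` and
`[a w - a u, a M - a u]`. -/
theorem card_le_ncard_edgeDiffs_of_pivots [Fintype V] [DecidableEq V] (G : SimpleGraph V)
    {a : V → ℤ} (ha : Injective a) {M u w : V} (hM : ∀ v, a v ≤ a M) (huw : a u ≤ a w)
    (E : Finset V)
    (hlow : ∀ v ∉ E, a v < a u → G.Adj M v)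
    (hmid : ∀ v ∉ E, a u < a v → a v < a w → G.Adj w v)
    (hhigh : ∀ v ∉ E, v ≠ u → a w ≤ a v → G.Adj v u) :
    #(Eᶜ.erase u) ≤ (G.edgeDiffs a).ncard := by
  let d : V → ℤ := fun v =>
    if a v < a u then a M - a v else if a v < a w then a w - a v else a v - a u
  rw [← Set.ncard_coe_finset]
  refine Set.ncard_le_ncard_of_injOn d ?_ ?_ (G.finite_edgeDiffs a)
  · intro v hv
    simp only [coe_erase, coe_compl, Set.mem_sdiff, Set.mem_compl_iff, mem_coe,
      Set.mem_singleton_iff] at hv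
    obtain ⟨hvE, hvu⟩ := hv
    simp only [d]
    split_ifs with hvu' hvw
    · exact ⟨M, v, hlow v hvE hvu', (abs_of_nonneg (sub_nonneg.2 (hM v))).symm⟩
    · have hne : a v ≠ a u := ha.ne hvu
      exact ⟨w, v, hmid v hvE (by omega) hvw, by rw [abs_of_nonneg (by omega)]⟩
    · exact ⟨v, u, hhigh v hvE hvu (not_lt.1 hvw), by rw [abs_of_nonneg (by omega)]⟩
  · intro v hv v' hv' h
    have hne : a v ≠ a u := ha.ne (mem_erase.1 hv).1
    have hne' : a v' ≠ a u := ha.ne (mem_erase.1 hv').1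
    have := hM v
    have := hM v'
    have := hM w
    simp only [d] at h
    apply ha
    split_ifs at h <;> omega

theorem card_add_card_sub_one_le_ncard_edgeSums [Finite V] (G : SimpleGraph V)
    {a : V → ℤ} (ha : Injective a) {m M : V} (hm : ∀ v, a m ≤ a v) (hM : ∀ v, a v ≤ a M)
    (A B : Finset V) (hA : ∀ v ∈ A, G.Adj m v) (hB : ∀ v ∈ B, G.Adj M v) :
    #A + #B - 1 ≤ (G.edgeSums a).ncard := by
  set I := A.image (a m + a ·)
  set J := B.image (a M + a ·)
  have hI : #I = #A := card_image_of_injective _ ((add_right_injective _).comp ha)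
  have hJ : #J = #B := card_image_of_injective _ ((add_right_injective _).comp ha)
  have hIJ : I ∩ J ⊆ {a m + a M} := by
    intro s hs
    obtain ⟨⟨v, -, rfl⟩, ⟨v', -, hv'⟩⟩ := And.imp mem_image.1 mem_image.1 (mem_inter.1 hs)
    have := hM v
    have := hm v'
    rw [mem_singleton]
    omega
  have hsub : ↑(I ∪ J) ⊆ G.edgeSums a := by
    intro s hs
    rcases mem_union.1 (mem_coe.1 hs) with hs | hs
    · obtain ⟨v, hv, rfl⟩ := mem_image.1 hs
      exact ⟨m, v, hA v hv, rfl⟩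
    · obtain ⟨v, hv, rfl⟩ := mem_image.1 hs
      exact ⟨M, v, hB v hv, rfl⟩
  calc #A + #B - 1 ≤ #(I ∪ J) := by
        have := card_union_add_card_inter I J
        have := card_le_card hIJ
        rw [card_singleton] at this
        omega
    _ ≤ (G.edgeSums a).ncard := by
        rw [← Set.ncard_coe_finset]
        exact Set.ncard_le_ncard hsub (G.finite_edgeSums a)

def completeMinusTwoCliques (P Q : Finset V) : SimpleGraph V where
  Adj u v := u ≠ v ∧ ¬(u ∈ P ∧ v ∈ P) ∧ ¬(u ∈ Q ∧ v ∈ Q)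
  symm := ⟨fun _ _ h => ⟨h.1.symm, fun h' => h.2.1 h'.symm, fun h' => h.2.2 h'.symm⟩⟩
  loopless := ⟨fun _ h => h.1 rfl⟩

@[simp]
theorem completeMinusTwoCliques_adj {P Q : Finset V} {u v : V} :
    (completeMinusTwoCliques P Q).Adj u v ↔ u ≠ v ∧ ¬(u ∈ P ∧ v ∈ P) ∧ ¬(u ∈ Q ∧ v ∈ Q) :=
  Iff.rfl

namespace completeMinusTwoCliques

variable {P Q : Finset V} {u v w : V}

theorem comm : completeMinusTwoCliques P Q = completeMinusTwoCliques Q P := by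
  ext u v
  simp only [completeMinusTwoCliques_adj]
  tauto

theorem adj_of_notMem (hP : w ∉ P) (hQ : w ∉ Q) (h : w ≠ v) :
    (completeMinusTwoCliques P Q).Adj w v :=
  completeMinusTwoCliques_adj.2 ⟨h, fun h => hP h.1, fun h => hQ h.1⟩

theorem adj_of_mem_of_notMem (huP : u ∈ P) (huQ : u ∉ Q) (hv : v ∉ P) :
    (completeMinusTwoCliques P Q).Adj u v :=
  completeMinusTwoCliques_adj.2 ⟨fun h => hv (h ▸ huP), fun h => hv h.2, fun h => huQ h.1⟩

variable [Fintype V] [DecidableEq V] {a : V → ℤ} {M : V}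

theorem card_sub_one_le_ncard_edgeDiffs_of_notMem (ha : Injective a) (hM : ∀ v, a v ≤ a M)
    (hMP : M ∉ P) (hMQ : M ∉ Q) :
    Fintype.card V - 1 ≤ ((completeMinusTwoCliques P Q).edgeDiffs a).ncard := by
  have hcard : #((∅ : Finset V)ᶜ.erase M) = Fintype.card V - 1 := by
    rw [compl_empty, card_erase_of_mem (mem_univ M), card_univ]
  refine hcard ▸ card_le_ncard_edgeDiffs_of_pivots _ ha hM le_rfl ∅ ?_ ?_ ?_
  · exact fun v _ hv => adj_of_notMem hMP hMQ (ne_of_apply_ne a hv.ne')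
  · exact fun v _ h₁ h₂ => absurd (h₁.trans h₂) (lt_irrefl _)
  · exact fun v _ hvM _ => (adj_of_notMem hMP hMQ hvM.symm).symm

theorem card_sub_le_ncard_edgeDiffs_of_below (ha : Injective a) (hM : ∀ v, a v ≤ a M)
    (hMP : M ∈ P) (hMQ : M ∉ Q) (hwP : w ∉ P) (hwQ : w ∉ Q) :
    Fintype.card V - 1 - #(P.filter (a · < a w)) ≤
      ((completeMinusTwoCliques P Q).edgeDiffs a).ncard := by
  set E := P.filter (a · < a w)
  have hwE : w ∈ Eᶜ := mem_compl.2 fun h => hwP (mem_filter.1 h).1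
  have hcard : #(Eᶜ.erase w) = Fintype.card V - 1 - #E := by
    rw [card_erase_of_mem hwE, card_compl]
    omega
  refine hcard ▸ card_le_ncard_edgeDiffs_of_pivots _ ha hM le_rfl E ?_ ?_ ?_
  · intro v hvE hv
    exact adj_of_mem_of_notMem hMP hMQ fun hvP => hvE (mem_filter.2 ⟨hvP, hv⟩)
  · intro v _ h₁ h₂
    exact absurd (h₁.trans h₂) (lt_irrefl _)
  · intro v _ hvw _
    exact (adj_of_notMem hwP hwQ hvw.symm).symm

theorem card_sub_le_ncard_edgeDiffs_of_above (ha : Injective a) (hM : ∀ v, a v ≤ a M)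
    (hMP : M ∈ P) (hPQ : Disjoint P Q) (hwP : w ∉ P) (hwQ : w ∉ Q)
    (hbelow : ∃ t ∈ P, a t < a w) :
    Fintype.card V - 1 - #(P.filter (a w < a ·)) ≤
      ((completeMinusTwoCliques P Q).edgeDiffs a).ncard := by
  obtain ⟨u, huP, hu⟩ := P.exists_min_image a ⟨M, hMP⟩
  obtain ⟨t, htP, ht⟩ := hbelow
  have huw : a u < a w := (hu t htP).trans_lt ht
  have huQ : u ∉ Q := Finset.disjoint_left.1 hPQ huP
  set E := P.filter (a w < a ·)
  have huE : u ∈ Eᶜ := mem_compl.2 fun h => (mem_filter.1 h).2.not_gt huw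
  have hcard : #(Eᶜ.erase u) = Fintype.card V - 1 - #E := by
    rw [card_erase_of_mem huE, card_compl]
    omega
  refine hcard ▸ card_le_ncard_edgeDiffs_of_pivots _ ha hM huw.le E ?_ ?_ ?_
  · intro v _ hv
    exact adj_of_mem_of_notMem hMP (Finset.disjoint_left.1 hPQ hMP) fun hvP => (hu v hvP).not_gt hv
  · intro v _ _ hvw
    exact adj_of_notMem hwP hwQ (ne_of_apply_ne a hvw.ne')
  · intro v hvE hvu hwv
    refine (adj_of_mem_of_notMem huP huQ fun hvP => hvE (mem_filter.2 ⟨hvP, ?_⟩)).symm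
    exact hwv.lt_of_ne fun h => hwP (ha h ▸ hvP)

theorem card_sub_le_ncard_edgeDiffs (hPQ : Disjoint P Q) {k : ℕ} (hP : #P ≤ k) (hQ : #Q ≤ k)
    (hV : 2 * k < Fintype.card V) (ha : Injective a) :
    Fintype.card V - 1 - k / 2 ≤ ((completeMinusTwoCliques P Q).edgeDiffs a).ncard := by
  have : Nonempty V := Fintype.card_pos_iff.1 (by omega)
  obtain ⟨M, hM⟩ := Finite.exists_max a
  obtain ⟨w, hw⟩ : (P ∪ Q)ᶜ.Nonempty := by
    rw [← card_pos, card_compl]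
    have := card_union_le P Q
    omega
  simp only [mem_compl, mem_union, not_or] at hw
  obtain ⟨hwP, hwQ⟩ := hw
  wlog hMQ : M ∉ Q generalizing P Q
  · rw [comm]
    exact this hPQ.symm hQ hP hwQ hwP (Finset.disjoint_left.1 hPQ.symm (not_not.1 hMQ))
  by_cases hMP : M ∉ P
  · exact le_trans (by omega) (card_sub_one_le_ncard_edgeDiffs_of_notMem ha hM hMP hMQ)
  rw [not_not] at hMP
  have hsplit : #(P.filter (a · < a w)) + #(P.filter (a w < a ·)) ≤ k := by
    rw [← card_union_of_disjoint (disjoint_filter.2 fun _ _ h₁ h₂ => lt_asymm h₁ h₂)]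
    exact (card_le_card (union_subset (filter_subset _ _) (filter_subset _ _))).trans hP
  by_cases hbelow : #(P.filter (a · < a w)) ≤ k / 2
  · exact le_trans (by omega) (card_sub_le_ncard_edgeDiffs_of_below ha hM hMP hMQ hwP hwQ)
  · obtain ⟨t, ht⟩ : (P.filter (a · < a w)).Nonempty := by
      rw [← card_pos]
      omega
    exact le_trans (by omega) (card_sub_le_ncard_edgeDiffs_of_above ha hM hMP hPQ hwP hwQ
      ⟨t, (mem_filter.1 ht).1, (mem_filter.1 ht).2⟩)

theorem exists_neighbors_card_sub_le (hPQ : Disjoint P Q) {k : ℕ} (hP : #P ≤ k) (hQ : #Q ≤ k)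
    (hk : 1 ≤ k) (w : V) :
    ∃ A : Finset V, (∀ v ∈ A, (completeMinusTwoCliques P Q).Adj w v) ∧
      Fintype.card V - k ≤ #A := by
  wlog hwQ : w ∉ Q generalizing P Q
  · rw [comm]
    exact this hPQ.symm hQ hP (Finset.disjoint_left.1 hPQ.symm (not_not.1 hwQ))
  by_cases hwP : w ∈ P
  · refine ⟨Pᶜ, fun v hv => adj_of_mem_of_notMem hwP hwQ (mem_compl.1 hv), ?_⟩
    rw [card_compl]
    omega
  · refine ⟨univ.erase w, fun v hv => adj_of_notMem hwP hwQ (ne_of_mem_erase hv).symm, ?_⟩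
    rw [card_erase_of_mem (mem_univ w), card_univ]
    omega

theorem two_mul_sub_le_ncard_edgeSums [Nonempty V] (hPQ : Disjoint P Q) {k : ℕ} (hP : #P ≤ k)
    (hQ : #Q ≤ k) (hk : 1 ≤ k) (ha : Injective a) :
    2 * (Fintype.card V - k) - 1 ≤ ((completeMinusTwoCliques P Q).edgeSums a).ncard := by
  obtain ⟨m, hm⟩ := Finite.exists_min a
  obtain ⟨M, hM⟩ := Finite.exists_max a
  obtain ⟨A, hA, hAcard⟩ := exists_neighbors_card_sub_le hPQ hP hQ hk m
  obtain ⟨B, hB, hBcard⟩ := exists_neighbors_card_sub_le hPQ hP hQ hk M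
  exact le_trans (by omega) (card_add_card_sub_one_le_ncard_edgeSums _ ha hm hM A B hA hB)

end completeMinusTwoCliques

end SimpleGraph

section Index

variable {V : Type*} [Fintype V]

theorem le_diffIndex (G : SimpleGraph V) {m : ℕ}
    (h : ∀ f : V → ℤ, Injective f → m ≤ (G.edgeDiffs f).ncard) : m ≤ diffIndex G := by
  obtain ⟨g, hg⟩ := Countable.exists_injective_nat V
  have hf : Injective fun v => (g v : ℤ) := Nat.cast_injective.comp hg
  exact le_csInf ⟨_, _, hf, rfl⟩ fun _ ⟨f, hf, hm⟩ => hm ▸ h f hf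

theorem sumIndex_eq (G : SimpleGraph V) {m : ℕ}
    (h : ∀ f : V → ℤ, Injective f → m ≤ (G.edgeSums f).ncard)
    {f : V → ℤ} (hf : Injective f) (hfm : (G.edgeSums f).ncard ≤ m) : sumIndex G = m :=
  le_antisymm ((Nat.sInf_le ⟨f, hf, rfl⟩ : sumIndex G ≤ (G.edgeSums f).ncard).trans hfm)
    (le_csInf ⟨_, f, hf, rfl⟩ fun _ ⟨g, hg, hm⟩ => hm ▸ h g hg)

end Index

section HatK

variable {n k : ℕ}

def lowerBlock (n k : ℕ) : Finset (Fin n) := {i | (i : ℕ) < k}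

def upperBlock (n k : ℕ) : Finset (Fin n) := {i | n - k ≤ (i : ℕ)}

theorem card_lowerBlock_le : #(lowerBlock n k) ≤ k := by
  rw [lowerBlock, Fin.card_filter_val_lt]
  exact min_le_right n k

theorem card_upperBlock_le : #(upperBlock n k) ≤ k := by
  have := card_filter_add_card_filter_not (s := (univ : Finset (Fin n))) (· < n - k)
  simp only [not_lt, Fin.card_filter_val_lt, card_univ, Fintype.card_fin] at this
  rw [upperBlock]
  omega

theorem disjoint_lowerBlock_upperBlock (h : 2 * k ≤ n) :
    Disjoint (lowerBlock n k) (upperBlock n k) := by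
  rw [lowerBlock, upperBlock, disjoint_filter]
  intros
  omega

def inlHom (n k : ℕ) :
    completeMinusTwoCliques (lowerBlock n k) (upperBlock n k) →g hatKkk n k where
  toFun := Sum.inl
  map_rel' {i j} h := by
    obtain ⟨hij, hl, hu⟩ := completeMinusTwoCliques_adj.1 h
    simp only [lowerBlock, upperBlock, mem_filter, mem_univ, true_and] at hl hu
    rw [hatKkk, fromRel_adj]
    exact ⟨Sum.inl_injective.ne hij, Or.inl (by tauto)⟩

theorem le_ncard_edgeDiffs_hatKkk (h : 2 * k < n) {f : Fin n ⊕ subPairs n k → ℤ}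
    (hf : Injective f) : n - 1 - k / 2 ≤ ((hatKkk n k).edgeDiffs f).ncard := by
  have := completeMinusTwoCliques.card_sub_le_ncard_edgeDiffs
    (disjoint_lowerBlock_upperBlock h.le) card_lowerBlock_le card_upperBlock_le
    (by simpa using h) (hf.comp Sum.inl_injective)
  rw [Fintype.card_fin] at this
  exact this.trans (Set.ncard_le_ncard (edgeDiffs_comp_hom (inlHom n k) f) (finite_edgeDiffs _ _))

theorem le_ncard_edgeSums_hatKkk (hk : 1 ≤ k) (h : 2 * k ≤ n) {f : Fin n ⊕ subPairs n k → ℤ}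
    (hf : Injective f) : 2 * n - 2 * k - 1 ≤ ((hatKkk n k).edgeSums f).ncard := by
  have : Nonempty (Fin n) := ⟨⟨0, by omega⟩⟩
  have := completeMinusTwoCliques.two_mul_sub_le_ncard_edgeSums
    (disjoint_lowerBlock_upperBlock h) card_lowerBlock_le card_upperBlock_le hk
    (hf.comp Sum.inl_injective)
  rw [Fintype.card_fin] at this
  exact le_trans (by omega)
    (this.trans (Set.ncard_le_ncard (edgeSums_comp_hom (inlHom n k) f) (finite_edgeSums _ _)))

def pairIndex (i j : ℕ) : ℕ := i + j.choose 2

theorem pairIndex_lt_choose {i j m : ℕ} (hij : i < j) (hjm : j < m) :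
    pairIndex i j < m.choose 2 :=
  calc pairIndex i j < (j + 1).choose 2 := by
        have : (j + 1).choose 2 = j + j.choose 2 := by simp [Nat.choose_succ_succ']
        rw [this, pairIndex]
        omega
    _ ≤ m.choose 2 := Nat.choose_le_choose 2 hjm

theorem pairIndex_inj {i j i' j' : ℕ} (hij : i < j) (hij' : i' < j')
    (h : pairIndex i j = pairIndex i' j') : i = i' ∧ j = j' := by
  rcases lt_trichotomy j j' with hj | rfl | hj
  · have := pairIndex_lt_choose hij hj
    unfold pairIndex at *
    omega
  · unfold pairIndex at h
    omega
  · have := pairIndex_lt_choose hij' hj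
    unfold pairIndex at *
    omega

def subdivLabel (n k : ℕ) (p : subPairs n k) : ℤ :=
  if (p.1.2 : ℕ) < k then n + 1 + pairIndex p.1.1 p.1.2
  else -(pairIndex (p.1.1 - (n - k)) (p.1.2 - (n - k)) : ℕ)

def sumLabel (n k : ℕ) : Fin n ⊕ subPairs n k → ℤ :=
  Sum.elim (fun i => (i : ℕ) + 1) (subdivLabel n k)

theorem subdivLabel_bounds (p : subPairs n k) :
    (p.1.2 < k ∧ n + 1 ≤ subdivLabel n k p ∧ subdivLabel n k p ≤ n + k.choose 2) ∨
      (n - k ≤ p.1.1 ∧ 1 - k.choose 2 ≤ subdivLabel n k p ∧ subdivLabel n k p ≤ 0) := by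
  obtain ⟨hlt, hside⟩ := p.2
  rw [Fin.lt_def] at hlt
  have := p.1.2.isLt
  unfold subdivLabel
  split_ifs with hlow
  · have := pairIndex_lt_choose hlt hlow
    omega
  · have := pairIndex_lt_choose (m := k) (i := p.1.1 - (n - k)) (j := p.1.2 - (n - k))
      (by omega) (by omega)
    omega

theorem subdivLabel_injective : Injective (subdivLabel n k) := by
  intro p q h
  have hp := Fin.lt_def.1 p.2.1
  have hq := Fin.lt_def.1 q.2.1
  have hp' := p.2.2
  have hq' := q.2.2
  unfold subdivLabel at h
  split_ifs at h with hpk hqk hqk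
  · obtain ⟨h₁, h₂⟩ := pairIndex_inj hp hq (by omega)
    exact Subtype.ext (Prod.ext (Fin.ext h₁) (Fin.ext h₂))
  · omega
  · omega
  · obtain ⟨h₁, h₂⟩ := pairIndex_inj (i := p.1.1 - (n - k)) (j := p.1.2 - (n - k))
      (i' := q.1.1 - (n - k)) (j' := q.1.2 - (n - k))
      (by omega) (by omega) (by omega)
    exact Subtype.ext (Prod.ext (Fin.ext (by omega)) (Fin.ext (by omega)))

theorem sumLabel_injective : Injective (sumLabel n k) := by
  refine Injective.sumElim (fun i j h => Fin.ext (by simpa using h)) subdivLabel_injective ?_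
  intro i p
  have := i.isLt
  rcases subdivLabel_bounds p with h | h <;> omega

theorem natCast_add_one_add_subdivLabel_mem_Icc (hn : k.choose 2 + 2 * k ≤ n) {i : Fin n}
    {q : subPairs n k} (hi : i = q.1.1 ∨ i = q.1.2) :
    ((i : ℕ) : ℤ) + 1 + subdivLabel n k q ∈ Set.Icc ((k : ℤ) + 2) (2 * n - k) := by
  have hq := Fin.lt_def.1 q.2.1
  have hiq : (q.1.1 : ℕ) ≤ i ∧ (i : ℕ) ≤ q.1.2 := by
    rcases hi with rfl | rfl <;> omega
  have := q.1.2.isLt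
  rw [Set.mem_Icc]
  rcases subdivLabel_bounds q with h | h <;> omega

theorem edgeSums_sumLabel_subset (hn : k.choose 2 + 2 * k ≤ n) :
    (hatKkk n k).edgeSums (sumLabel n k) ⊆ Set.Icc ((k : ℤ) + 2) (2 * n - k) := by
  rintro _ ⟨x, y, hxy, rfl⟩
  rw [hatKkk, fromRel_adj] at hxy
  rcases x with i | p <;> rcases y with j | q <;>
    simp only [sumLabel, Sum.elim_inl, Sum.elim_inr, ne_eq, reduceCtorEq, not_false_eq_true,
      Sum.inl.injEq, or_false, false_or, true_and, or_self, and_false] at hxy ⊢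
  · rw [Set.mem_Icc]
    omega
  · exact natCast_add_one_add_subdivLabel_mem_Icc hn hxy
  · exact add_comm (subdivLabel n k p) _ ▸ natCast_add_one_add_subdivLabel_mem_Icc hn hxy

theorem sumIndex_hatKkk (hk : 1 ≤ k) (hn : k.choose 2 + 2 * k ≤ n) :
    sumIndex (hatKkk n k) = 2 * n - 2 * k - 1 := by
  refine sumIndex_eq _ (fun f hf => le_ncard_edgeSums_hatKkk hk (by omega) hf) sumLabel_injective ?_
  calc _ ≤ (Set.Icc ((k : ℤ) + 2) (2 * n - k)).ncard :=
        Set.ncard_le_ncard (edgeSums_sumLabel_subset hn) (Set.finite_Icc _ _)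
    _ = 2 * n - 2 * k - 1 := by
        rw [← coe_Icc, Set.ncard_coe_finset, Int.card_Icc]
        omega

end HatK

theorem Int.ceil_natCast_two_mul_sub_one_div_two {m : ℕ} (hm : 1 ≤ m) :
    ⌈((2 * m - 1 : ℕ) : ℝ) / 2⌉ = m := by
  rw [Int.ceil_eq_iff, Nat.cast_sub (by omega)]
  push_cast
  constructor <;> linarith

/-- For `k ≥ 2` and `n ≥ C(k,2) + 2k`, the difference index of
`K̂_n^{(k,k)}` is at least `n - 2k/3 - 1`; in particular it is at least
`⌈S(K̂_n^{(k,k)})/2⌉ + k/3 - 1`, where the sum index is `S(K̂_n^{(k,k)}) = 2n - 2k - 1`. -/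
theorem stmt13 (n k : ℕ) (hk : 2 ≤ k) (hn : k.choose 2 + 2 * k ≤ n) :
    (n : ℝ) - 2 * k / 3 - 1 ≤ (diffIndex (hatKkk n k) : ℝ) ∧
    sumIndex (hatKkk n k) = 2 * n - 2 * k - 1 ∧
    (⌈(sumIndex (hatKkk n k) : ℝ) / 2⌉ : ℝ) + k / 3 - 1 ≤ (diffIndex (hatKkk n k) : ℝ) := by
  have hnk : 2 * k < n := by
    have : 1 ≤ k.choose 2 := Nat.choose_le_choose 2 hk
    omega
  have hS := sumIndex_hatKkk (by omega) hn
  have hD : n - 1 - k / 2 ≤ diffIndex (hatKkk n k) :=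
    le_diffIndex _ fun _ hf => le_ncard_edgeDiffs_hatKkk hnk hf
  have hD' : (n : ℝ) - 2 * k / 3 - 1 ≤ diffIndex (hatKkk n k) := by
    have : 3 * n ≤ 3 * diffIndex (hatKkk n k) + 2 * k + 3 := by omega
    have := (Nat.cast_le (α := ℝ)).2 this
    push_cast at this
    linarith
  refine ⟨hD', hS, ?_⟩
  rw [hS, show 2 * n - 2 * k - 1 = 2 * (n - k) - 1 by omega,
    Int.ceil_natCast_two_mul_sub_one_div_two (by omega), Int.cast_natCast,
    Nat.cast_sub (by omega : k ≤ n)]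
  linarith
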